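/- Let X be a Banach space and let (x_n) be a seminormalized sequence in X that is K-basic (K ≥ 1) and λ-dominates the summing basis of c₀ (λ > 0). Fix ε ∈ (0,1). For each n ≥ 1 let (λ_k^{(n+1)})_{k≥n+1} be positive reals such that α_n := 1 − ∑_{k=n+1}^∞ λ_k^{(n+1)} satisfies 1/2 ≤ α_n < 1 for every n, the sequence (α_n) is nondecreasing with α_n → 1, and ∑_{n=1}^∞ ∑_{k=n+1}^∞ λ_k^{(n+1)} < ε·inf_n‖x_n‖/(4K·sup_n‖x_n‖). Define z_n := α_n x_n + ∑_{k=n+1}^∞ λ_k^{(n+1)} x_k, and let K = K_σ^+({x_n}). Then the map f : K → K defined by f(∑_{i=1}^∞ t_i x_i) := (1 − ∑_{i=2}^∞ t_i)·z_1 + ∑_{i=2}^∞ t_i z_i is well defined (each element of K has a unique representation ∑ t_i x_i with t_i ≥ 0, ∑ t_i ≤ 1), affine, maps K into K, and has no fixed point in K. -/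

import Mathlib

/-!
Put `P n k := α n δ_{nk} + Λ n k`, so that `z n = ∑ₖ P n k • x k` with `P` row-stochastic and
upper triangular. Replacing `t 0` by `1 - ∑_{i ≥ 1} t i` turns a coefficient sequence `t` into a
probability vector `b` with `f (∑ tᵢ xᵢ) = ∑ bₙ zₙ`, and by Fubini this is `∑ₖ (b P)ₖ xₖ`.
Hence `f` maps `K_σ^+` into itself and is affine, the coefficients being unique because the
basic sequence `(xₙ)` has no zero term. A fixed point would give `b P = t`; then `∑ t = 1`, so
`b = t` and `b P = b`, and triangularity with `P n n = α n < 1` forces `b = 0` term by term.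
-/

open Filter Topology

noncomputable section

/-- `(x_n)` is `K`-basic: for all scalars and `n ≤ m`,
`‖∑_{i<n} a_i x_i‖ ≤ K ‖∑_{i<m} a_i x_i‖`. -/
def IsKBasic {X : Type*} [NormedAddCommGroup X] [NormedSpace ℝ X]
    (K : ℝ) (x : ℕ → X) : Prop :=
  ∀ (a : ℕ → ℝ) (n m : ℕ), n ≤ m →
    ‖∑ i ∈ Finset.range n, a i • x i‖ ≤ K * ‖∑ i ∈ Finset.range m, a i • x i‖

/-- `(x_n)` `λ`-dominates the summing basis of `c₀`:
`|∑_{k ≤ i < n} a_i| ≤ λ ‖∑_{i<n} a_i x_i‖` for all `k ≤ n`. -/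
def DomSumming {X : Type*} [NormedAddCommGroup X] [NormedSpace ℝ X]
    (lam : ℝ) (x : ℕ → X) : Prop :=
  ∀ (a : ℕ → ℝ) (k n : ℕ), k ≤ n →
    |∑ i ∈ Finset.Ico k n, a i| ≤ lam * ‖∑ i ∈ Finset.range n, a i • x i‖

/-- `(y_n)` is seminormalized: `0 < A ≤ ‖y_n‖ ≤ B < ∞` for all `n`. -/
def Seminormalized {X : Type*} [NormedAddCommGroup X] (y : ℕ → X) : Prop :=
  ∃ A B : ℝ, 0 < A ∧ ∀ n, A ≤ ‖y n‖ ∧ ‖y n‖ ≤ B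

/-- The σ-convex conical hull `K_σ^+({x_n})` of a sequence. -/
def KplusSigma {X : Type*} [NormedAddCommGroup X] [NormedSpace ℝ X] (x : ℕ → X) : Set X :=
  {v | ∃ t : ℕ → ℝ, (∀ i, 0 ≤ t i) ∧ (∀ i, t i ≤ 1) ∧ Summable t ∧ (∑' i, t i) ≤ 1 ∧
    HasSum (fun i => t i • x i) v}

/-- A valid coefficient sequence for `K_σ^+`. -/
def ValidCoeff (t : ℕ → ℝ) : Prop :=
  (∀ i, 0 ≤ t i) ∧ (∀ i, t i ≤ 1) ∧ Summable t ∧ (∑' i, t i) ≤ 1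

/-- A map is affine on a convex set `K`. -/
def AffineOn {X : Type*} [NormedAddCommGroup X] [NormedSpace ℝ X] (T : X → X) (K : Set X) : Prop :=
  ∀ x ∈ K, ∀ y ∈ K, ∀ s : ℝ, 0 ≤ s → s ≤ 1 →
    T (s • x + (1 - s) • y) = s • T x + (1 - s) • T y


section

variable {X : Type*} [NormedAddCommGroup X] [NormedSpace ℝ X]

lemma mem_kplusSigma_iff {x : ℕ → X} {v : X} :
    v ∈ KplusSigma x ↔ ∃ t, ValidCoeff t ∧ HasSum (fun i => t i • x i) v := by
  simp only [KplusSigma, ValidCoeff, Set.mem_ofPred_eq, and_assoc]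

lemma ValidCoeff.of_hasSum_one {c : ℕ → ℝ} (hc0 : ∀ i, 0 ≤ c i) (hc : HasSum c 1) :
    ValidCoeff c :=
  ⟨hc0, fun i => hc.tsum_eq ▸ hc.summable.le_tsum i fun j _ => hc0 j, hc.summable,
    hc.tsum_eq.le⟩

lemma convex_setOf_validCoeff : Convex ℝ {t : ℕ → ℝ | ValidCoeff t} := by
  rintro t ⟨ht0, ht1, hts, htle⟩ s ⟨hs0, hs1, hss, hsle⟩ a b ha hb hab
  refine ⟨fun i => ?_, fun i => ?_, (hts.const_smul a).add (hss.const_smul b), ?_⟩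
  · simp only [Pi.add_apply, Pi.smul_apply, smul_eq_mul]
    have := ht0 i; have := hs0 i
    positivity
  · calc (a • t + b • s) i = a * t i + b * s i := rfl
      _ ≤ a * 1 + b * 1 := by gcongr <;> [exact ht1 i; exact hs1 i]
      _ = 1 := by rw [mul_one, mul_one, hab]
  · calc ∑' i, (a • t + b • s) i = a * ∑' i, t i + b * ∑' i, s i :=
          ((hts.hasSum.mul_left a).add (hss.hasSum.mul_left b)).tsum_eq
      _ ≤ a * 1 + b * 1 := by gcongr
      _ = 1 := by rw [mul_one, mul_one, hab]

lemma Summable.smul_of_norm_le [CompleteSpace X] {x : ℕ → X} {B : ℝ} (hx : ∀ n, ‖x n‖ ≤ B)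
    {t : ℕ → ℝ} (ht : Summable t) : Summable fun i => t i • x i :=
  ht.abs.mul_right B |>.of_norm_bounded fun i => by
    rw [norm_smul, Real.norm_eq_abs]
    exact mul_le_mul_of_nonneg_left (hx i) (abs_nonneg _)

namespace IsKBasic

variable {K : ℝ} {x : ℕ → X}

lemma eq_zero_of_hasSum_zero (hbasic : IsKBasic K x) (hx : ∀ n, x n ≠ 0) {a : ℕ → ℝ}
    (ha : HasSum (fun i => a i • x i) 0) : a = 0 := by
  have hpartial : ∀ n, ∑ i ∈ Finset.range n, a i • x i = 0 := fun n =>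
    norm_le_zero_iff.1 <| ge_of_tendsto (by simpa using ha.tendsto_sum_nat.norm.const_mul K)
      ((eventually_ge_atTop n).mono fun m hm => hbasic a n m hm)
  funext i
  have hi : a i • x i = 0 := by
    simpa [Finset.sum_range_succ, hpartial i] using hpartial (i + 1)
  exact (smul_eq_zero.1 hi).resolve_right (hx i)

lemma coeff_unique (hbasic : IsKBasic K x) (hx : ∀ n, x n ≠ 0) {a b : ℕ → ℝ} {v : X}
    (ha : HasSum (fun i => a i • x i) v) (hb : HasSum (fun i => b i • x i) v) : a = b :=
  sub_eq_zero.1 <| hbasic.eq_zero_of_hasSum_zero hx <| by simpa [sub_smul] using ha.sub hb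

end IsKBasic

def kplusCoeff (x : ℕ → X) (v : X) : ℕ → ℝ :=
  Classical.epsilon fun t => ValidCoeff t ∧ HasSum (fun i => t i • x i) v

lemma kplusCoeff_eq {K : ℝ} {x : ℕ → X} (hbasic : IsKBasic K x) (hx : ∀ n, x n ≠ 0)
    {t : ℕ → ℝ} {v : X} (ht : ValidCoeff t) (hv : HasSum (fun i => t i • x i) v) :
    kplusCoeff x v = t :=
  hbasic.coeff_unique hx (Classical.epsilon_spec (p := fun t => ValidCoeff t ∧
    HasSum (fun i => t i • x i) v) ⟨t, ht, hv⟩).2 hv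

def completeHead (t : ℕ → ℝ) : ℕ → ℝ :=
  Function.update t 0 (1 - ∑' i, t (i + 1))

section completeHead

variable {t : ℕ → ℝ}

@[simp] lemma completeHead_zero : completeHead t 0 = 1 - ∑' i, t (i + 1) :=
  Function.update_self ..

@[simp] lemma completeHead_succ (n : ℕ) : completeHead t (n + 1) = t (n + 1) :=
  Function.update_of_ne n.succ_ne_zero ..

lemma completeHead_nonneg (ht : ValidCoeff t) (n : ℕ) : 0 ≤ completeHead t n := by
  obtain ⟨ht0, -, hts, htle⟩ := ht
  cases n with
  | zero =>
    rw [completeHead_zero, sub_nonneg]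
    linarith [hts.tsum_eq_zero_add, ht0 0]
  | succ n => simpa using ht0 (n + 1)

lemma hasSum_completeHead (ht : Summable t) : HasSum (completeHead t) 1 := by
  refine (hasSum_nat_add_iff' 1).1 ?_
  simpa using ((summable_nat_add_iff 1).2 ht).hasSum

lemma completeHead_eq_self (ht : HasSum t 1) : completeHead t = t := by
  rw [completeHead, ← ht.tsum_eq, ht.summable.tsum_eq_zero_add, add_sub_cancel_right,
    Function.update_eq_self]

lemma completeHead_add_smul {s : ℕ → ℝ} (ht : Summable t) (hs : Summable s) {a b : ℝ}
    (hab : a + b = 1) : completeHead (a • t + b • s) = a • completeHead t + b • completeHead s := by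
  have htail := (((summable_nat_add_iff 1).2 ht).hasSum.mul_left a).add
    (((summable_nat_add_iff 1).2 hs).hasSum.mul_left b)
  funext n
  cases n with
  | zero =>
    simp only [completeHead_zero, Pi.add_apply, Pi.smul_apply, smul_eq_mul, htail.tsum_eq]
    linear_combination -hab
  | succ n => simp

end completeHead

structure IsRowStochastic (P : ℕ → ℕ → ℝ) : Prop where
  nonneg : ∀ n k, 0 ≤ P n k
  hasSum_row : ∀ n, HasSum (P n) 1

lemma isRowStochastic_single_add {α : ℕ → ℝ} {Λ : ℕ → ℕ → ℝ} (hα : ∀ n, 0 ≤ α n)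
    (hΛ0 : ∀ n k, 0 ≤ Λ n k) (hΛ : ∀ n, HasSum (Λ n) (1 - α n)) :
    IsRowStochastic fun n => Pi.single n (α n) + Λ n where
  nonneg n k := add_nonneg (by by_cases h : k = n <;> simp [h, hα]) (hΛ0 n k)
  hasSum_row n := by
    have := (hasSum_pi_single n (α n)).add (hΛ n)
    rwa [add_sub_cancel] at this

lemma hasSum_pi_single_add_smul {x : ℕ → X} {Λ : ℕ → ℝ} {w : X} (n : ℕ) (a : ℝ)
    (hΛ : HasSum (fun k => Λ k • x k) w) :
    HasSum (fun k => (Pi.single n a + Λ : ℕ → ℝ) k • x k) (a • x n + w) := by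
  have hsingle : HasSum (fun k => (Pi.single n a : ℕ → ℝ) k • x k) (a • x n) := by
    simpa using hasSum_single (f := fun k => (Pi.single n a : ℕ → ℝ) k • x k) n
      fun k hk => by simp [hk]
  simpa only [Pi.add_apply, add_smul] using hsingle.add hΛ

def tsumVecMul (b : ℕ → ℝ) (P : ℕ → ℕ → ℝ) : ℕ → ℝ := fun k => ∑' n, b n * P n k

namespace IsRowStochastic

variable {P : ℕ → ℕ → ℝ} {b : ℕ → ℝ}

lemma summable_mul (hP : IsRowStochastic P) (hb0 : ∀ n, 0 ≤ b n) (hb : Summable b) :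
    Summable fun p : ℕ × ℕ => b p.1 * P p.1 p.2 :=
  (summable_prod_of_nonneg fun p => mul_nonneg (hb0 _) (hP.nonneg _ _)).2
    ⟨fun n => ((hP.hasSum_row n).mul_left (b n)).summable,
      by simpa [((hP.hasSum_row _).mul_left _).tsum_eq] using hb⟩

lemma tsumVecMul_nonneg (hP : IsRowStochastic P) (hb0 : ∀ n, 0 ≤ b n) (k : ℕ) :
    0 ≤ tsumVecMul b P k :=
  tsum_nonneg fun n => mul_nonneg (hb0 n) (hP.nonneg n k)

lemma hasSum_tsumVecMul (hP : IsRowStochastic P) (hb0 : ∀ n, 0 ≤ b n) (hb : HasSum b 1) :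
    HasSum (tsumVecMul b P) 1 := by
  have hF := hP.summable_mul hb0 hb.summable
  have hF1 : HasSum (fun p : ℕ × ℕ => b p.1 * P p.1 p.2) 1 := by
    convert hF.hasSum
    exact hb.unique <| by
      simpa using hF.hasSum.prod_fiberwise fun n => (hP.hasSum_row n).mul_left (b n)
  exact ((Equiv.prodComm ℕ ℕ).hasSum_iff.2 hF1).prod_fiberwise fun k =>
    (hF.prod_symm.prod_factor k).hasSum

lemma exists_hasSum_smul_and_hasSum_tsumVecMul_smul [CompleteSpace X] (hP : IsRowStochastic P)
    {x z : ℕ → X} {B : ℝ} (hx : ∀ k, ‖x k‖ ≤ B) (hz : ∀ n, HasSum (fun k => P n k • x k) (z n))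
    (hb0 : ∀ n, 0 ≤ b n) (hb : Summable b) :
    ∃ v, HasSum (fun n => b n • z n) v ∧ HasSum (fun k => tsumVecMul b P k • x k) v := by
  have hF := hP.summable_mul hb0 hb
  have hG : Summable fun p : ℕ × ℕ => (b p.1 * P p.1 p.2) • x p.2 :=
    (hF.mul_right B).of_norm_bounded fun p => by
      rw [norm_smul, Real.norm_eq_abs, abs_of_nonneg (mul_nonneg (hb0 _) (hP.nonneg _ _))]
      exact mul_le_mul_of_nonneg_left (hx _) (mul_nonneg (hb0 _) (hP.nonneg _ _))
  refine ⟨_, hG.hasSum.prod_fiberwise fun n => ?_,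
    ((Equiv.prodComm ℕ ℕ).hasSum_iff.2 hG.hasSum).prod_fiberwise fun k =>
      (hF.prod_symm.prod_factor k).hasSum.smul_const (x k)⟩
  simpa only [mul_smul] using (hz n).const_smul (b n)

end IsRowStochastic

lemma eq_zero_of_tsumVecMul_eq_self {P : ℕ → ℕ → ℝ} {b : ℕ → ℝ}
    (htri : ∀ n k, k < n → P n k = 0) (hdiag : ∀ n, P n n ≠ 1) (h : tsumVecMul b P = b) :
    b = 0 := by
  funext k
  induction k using Nat.strong_induction_on with
  | _ k ih =>
    have hk : b k = b k * P k k := by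
      conv_lhs => rw [← h]
      refine tsum_eq_single k fun n hn => ?_
      rcases hn.lt_or_gt with hlt | hgt
      · simp [ih n hlt]
      · simp [htri n k hgt]
    have : b k * (1 - P k k) = 0 := by linear_combination hk
    exact (mul_eq_zero.1 this).resolve_right (sub_ne_zero.2 (hdiag k).symm)

def kplusMap (x z : ℕ → X) (v : X) : X :=
  ∑' n, completeHead (kplusCoeff x v) n • z n

section kplusMap

variable [CompleteSpace X] {K B : ℝ} {x z : ℕ → X} {P : ℕ → ℕ → ℝ}

lemma hasSum_completeHead_smul_kplusMap (hbasic : IsKBasic K x) (hx0 : ∀ n, x n ≠ 0)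
    (hxB : ∀ n, ‖x n‖ ≤ B) (hP : IsRowStochastic P)
    (hz : ∀ n, HasSum (fun k => P n k • x k) (z n)) {t : ℕ → ℝ} {v : X} (ht : ValidCoeff t)
    (hv : HasSum (fun i => t i • x i) v) :
    HasSum (fun n => completeHead t n • z n) (kplusMap x z v) := by
  obtain ⟨w, hw, -⟩ := hP.exists_hasSum_smul_and_hasSum_tsumVecMul_smul hxB hz
    (completeHead_nonneg ht) (hasSum_completeHead ht.2.2.1).summable
  rwa [kplusMap, kplusCoeff_eq hbasic hx0 ht hv, hw.tsum_eq]

lemma hasSum_tsumVecMul_smul_kplusMap (hbasic : IsKBasic K x) (hx0 : ∀ n, x n ≠ 0)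
    (hxB : ∀ n, ‖x n‖ ≤ B) (hP : IsRowStochastic P)
    (hz : ∀ n, HasSum (fun k => P n k • x k) (z n)) {t : ℕ → ℝ} {v : X} (ht : ValidCoeff t)
    (hv : HasSum (fun i => t i • x i) v) :
    HasSum (fun k => tsumVecMul (completeHead t) P k • x k) (kplusMap x z v) := by
  obtain ⟨w, hw, hw'⟩ := hP.exists_hasSum_smul_and_hasSum_tsumVecMul_smul hxB hz
    (completeHead_nonneg ht) (hasSum_completeHead ht.2.2.1).summable
  rwa [(hasSum_completeHead_smul_kplusMap hbasic hx0 hxB hP hz ht hv).unique hw]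

lemma kplusMap_tsum (hbasic : IsKBasic K x) (hx0 : ∀ n, x n ≠ 0) (hxB : ∀ n, ‖x n‖ ≤ B)
    (hP : IsRowStochastic P) (hz : ∀ n, HasSum (fun k => P n k • x k) (z n)) {t : ℕ → ℝ}
    (ht : ValidCoeff t) :
    kplusMap x z (∑' i, t i • x i) =
      (1 - ∑' i, t (i + 1)) • z 0 + ∑' i, t (i + 1) • z (i + 1) := by
  have h := hasSum_completeHead_smul_kplusMap hbasic hx0 hxB hP hz ht
    (Summable.smul_of_norm_le hxB ht.2.2.1).hasSum
  rw [← h.tsum_eq, h.summable.tsum_eq_zero_add]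
  simp

lemma mapsTo_kplusMap (hbasic : IsKBasic K x) (hx0 : ∀ n, x n ≠ 0) (hxB : ∀ n, ‖x n‖ ≤ B)
    (hP : IsRowStochastic P) (hz : ∀ n, HasSum (fun k => P n k • x k) (z n)) :
    Set.MapsTo (kplusMap x z) (KplusSigma x) (KplusSigma x) := by
  intro v hv
  obtain ⟨t, ht, htv⟩ := mem_kplusSigma_iff.1 hv
  have hb0 := completeHead_nonneg ht
  exact mem_kplusSigma_iff.2 ⟨_, .of_hasSum_one (hP.tsumVecMul_nonneg hb0)
    (hP.hasSum_tsumVecMul hb0 (hasSum_completeHead ht.2.2.1)),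
    hasSum_tsumVecMul_smul_kplusMap hbasic hx0 hxB hP hz ht htv⟩

lemma affineOn_kplusMap (hbasic : IsKBasic K x) (hx0 : ∀ n, x n ≠ 0) (hxB : ∀ n, ‖x n‖ ≤ B)
    (hP : IsRowStochastic P) (hz : ∀ n, HasSum (fun k => P n k • x k) (z n)) :
    AffineOn (kplusMap x z) (KplusSigma x) := by
  intro u hu v hv a ha0 ha1
  obtain ⟨t, ht, htu⟩ := mem_kplusSigma_iff.1 hu
  obtain ⟨s, hs, hsv⟩ := mem_kplusSigma_iff.1 hv
  have hab : a + (1 - a) = 1 := add_sub_cancel a 1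
  have hw : ValidCoeff (a • t + (1 - a) • s) :=
    convex_setOf_validCoeff ht hs ha0 (sub_nonneg.2 ha1) hab
  have hwx : HasSum (fun i => (a • t + (1 - a) • s) i • x i) (a • u + (1 - a) • v) := by
    simpa only [Pi.add_apply, Pi.smul_apply, smul_eq_mul, add_smul, mul_smul] using
      (htu.const_smul a).add (hsv.const_smul (1 - a))
  refine (hasSum_completeHead_smul_kplusMap hbasic hx0 hxB hP hz hw hwx).unique ?_
  rw [completeHead_add_smul ht.2.2.1 hs.2.2.1 hab]
  simpa only [Pi.add_apply, Pi.smul_apply, smul_eq_mul, add_smul, mul_smul] using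
    ((hasSum_completeHead_smul_kplusMap hbasic hx0 hxB hP hz ht htu).const_smul a).add
      ((hasSum_completeHead_smul_kplusMap hbasic hx0 hxB hP hz hs hsv).const_smul (1 - a))

lemma kplusMap_ne_self (hbasic : IsKBasic K x) (hx0 : ∀ n, x n ≠ 0) (hxB : ∀ n, ‖x n‖ ≤ B)
    (hP : IsRowStochastic P) (htri : ∀ n k, k < n → P n k = 0) (hdiag : ∀ n, P n n ≠ 1)
    (hz : ∀ n, HasSum (fun k => P n k • x k) (z n)) {v : X} (hv : v ∈ KplusSigma x) :
    kplusMap x z v ≠ v := by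
  intro hfix
  obtain ⟨t, ht, htv⟩ := mem_kplusSigma_iff.1 hv
  have hc := hasSum_tsumVecMul_smul_kplusMap hbasic hx0 hxB hP hz ht htv
  rw [hfix] at hc
  have hct : tsumVecMul (completeHead t) P = t := hbasic.coeff_unique hx0 hc htv
  have ht1 : HasSum t 1 :=
    hct ▸ hP.hasSum_tsumVecMul (completeHead_nonneg ht) (hasSum_completeHead ht.2.2.1)
  rw [completeHead_eq_self ht1] at hct
  rw [eq_zero_of_tsumVecMul_eq_self htri hdiag hct] at ht1
  exact one_ne_zero (hasSum_zero.unique ht1).symm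

end kplusMap

end

theorem stmt14_general {X : Type*} [NormedAddCommGroup X] [NormedSpace ℝ X] [CompleteSpace X]
    (x : ℕ → X) (hsem : Seminormalized x)
    (K : ℝ)
    (hbasic : IsKBasic K x)
    (Λ : ℕ → ℕ → ℝ)
    (hpos : ∀ n k, n < k → 0 < Λ n k)
    (hzero : ∀ n k, k ≤ n → Λ n k = 0)
    (hsum : ∀ n, Summable (Λ n))
    (α : ℕ → ℝ) (hα : ∀ n, α n = 1 - ∑' k, Λ n k)
    (hα12 : ∀ n, 1 / 2 ≤ α n) (hα1 : ∀ n, α n < 1)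
    (hzs : ∀ n, Summable fun k => Λ n k • x k)
    (z : ℕ → X) (hz : ∀ n, z n = α n • x n + ∑' k, Λ n k • x k) :
    (∀ t s : ℕ → ℝ, ValidCoeff t → ValidCoeff s →
        (∑' i, t i • x i) = (∑' i, s i • x i) → t = s) ∧
      ∃ f : X → X,
        (∀ t : ℕ → ℝ, ValidCoeff t →
          f (∑' i, t i • x i) =
            (1 - ∑' i, t (i + 1)) • z 0 + ∑' i, t (i + 1) • z (i + 1)) ∧
        Set.MapsTo f (KplusSigma x) (KplusSigma x) ∧
        AffineOn f (KplusSigma x) ∧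
        ∀ u ∈ KplusSigma x, f u ≠ u := by
  obtain ⟨A, B, hA, hxAB⟩ := hsem
  have hx0 : ∀ n, x n ≠ 0 := fun n hn => by linarith [(hxAB n).1, norm_eq_zero.2 hn]
  have hxB : ∀ n, ‖x n‖ ≤ B := fun n => (hxAB n).2
  have hΛ0 : ∀ n k, 0 ≤ Λ n k := fun n k =>
    (lt_or_ge n k).elim (fun h => (hpos n k h).le) fun h => (hzero n k h).ge
  set P : ℕ → ℕ → ℝ := fun n => Pi.single n (α n) + Λ n
  have hP : IsRowStochastic P := isRowStochastic_single_add (fun n => by linarith [hα12 n]) hΛ0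
    fun n => by simpa [hα n] using (hsum n).hasSum
  have htri : ∀ n k, k < n → P n k = 0 := fun n k h => by
    simp [P, h.ne, hzero n k h.le]
  have hdiag : ∀ n, P n n ≠ 1 := fun n => by simp [P, hzero n n le_rfl, (hα1 n).ne]
  have hPz : ∀ n, HasSum (fun k => P n k • x k) (z n) := fun n =>
    hz n ▸ hasSum_pi_single_add_smul n (α n) (hzs n).hasSum
  have hsx : ∀ t, ValidCoeff t → HasSum (fun i => t i • x i) (∑' i, t i • x i) := fun t ht =>
    (Summable.smul_of_norm_le hxB ht.2.2.1).hasSum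
  refine ⟨fun t s ht hs h => hbasic.coeff_unique hx0 (hsx t ht) (h ▸ hsx s hs), kplusMap x z,
    fun t => kplusMap_tsum hbasic hx0 hxB hP hPz, mapsTo_kplusMap hbasic hx0 hxB hP hPz,
    affineOn_kplusMap hbasic hx0 hxB hP hPz, fun v => kplusMap_ne_self hbasic hx0 hxB hP htri hdiag hPz⟩

theorem stmt14 {X : Type*} [NormedAddCommGroup X] [NormedSpace ℝ X] [CompleteSpace X]
    (x : ℕ → X) (hsem : Seminormalized x)
    (K lam ε : ℝ) (hK : 1 ≤ K) (hlam : 0 < lam)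
    (hbasic : IsKBasic K x) (hdom : DomSumming lam x)
    (hε : ε ∈ Set.Ioo (0:ℝ) 1)
    (Λ : ℕ → ℕ → ℝ)
    (hpos : ∀ n k, n < k → 0 < Λ n k)
    (hzero : ∀ n k, k ≤ n → Λ n k = 0)
    (hsum : ∀ n, Summable (Λ n))
    (α : ℕ → ℝ) (hα : ∀ n, α n = 1 - ∑' k, Λ n k)
    (hα12 : ∀ n, 1 / 2 ≤ α n) (hα1 : ∀ n, α n < 1)
    (hαmono : Monotone α) (hαlim : Tendsto α atTop (𝓝 (1:ℝ)))
    (htot : Summable fun n => ∑' k, Λ n k)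
    (hbound : (∑' n, ∑' k, Λ n k) < ε * (⨅ n, ‖x n‖) / (4 * K * ⨆ n, ‖x n‖))
    (hzs : ∀ n, Summable fun k => Λ n k • x k)
    (z : ℕ → X) (hz : ∀ n, z n = α n • x n + ∑' k, Λ n k • x k) :
    (∀ t s : ℕ → ℝ, ValidCoeff t → ValidCoeff s →
        (∑' i, t i • x i) = (∑' i, s i • x i) → t = s) ∧
      ∃ f : X → X,
        (∀ t : ℕ → ℝ, ValidCoeff t →
          f (∑' i, t i • x i) =
            (1 - ∑' i, t (i + 1)) • z 0 + ∑' i, t (i + 1) • z (i + 1)) ∧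
        Set.MapsTo f (KplusSigma x) (KplusSigma x) ∧
        AffineOn f (KplusSigma x) ∧
        ∀ u ∈ KplusSigma x, f u ≠ u :=
  stmt14_general x hsem K hbasic Λ hpos hzero hsum α hα hα12 hα1 hzs z hz
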